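/- arXiv:1711.01150 — 7 statements merged into one kernel-verified Lean document; each statement's English description precedes it below -/
import Mathlib

section
/- Let r ≥ 2 and n ≥ 1 be integers, set m = (r-1)n - 1, and let w = e^{2πi/r}. Suppose x_1, ..., x_m are complex numbers such that the R-Bonacci polynomial factors as R_{rn}(X) = X · ∏_{k=1}^{m} ∏_{l=0}^{r-1} (X - x_k w^l). Then for every j with 0 ≤ j ≤ m, the j-th elementary symmetric polynomial of the r-th powers of the x_k satisfies σ_j(x_1^r, ..., x_m^r) = (-1)^j · C_r(rn - j - 1, j). -/
noncomputable def RBon (r : ℕ) : ℕ → Polynomial ℂ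
  | 0 => 0
  | 1 => 1
  | n + 2 => ∑ i ∈ (Finset.range r).attach,
      Polynomial.X ^ (i : ℕ) * RBon r (n + 2 - (r - (i : ℕ)))
  decreasing_by
    have h := i.2
    rw [Finset.mem_range] at h
    omega

noncomputable def rnomial (r n j : ℕ) : ℕ :=
  ((∑ i ∈ Finset.range r, (Polynomial.X : Polynomial ℕ) ^ i) ^ n).coeff j

/-!
Reflecting `R_N` at its degree bound `(r - 1)(N - 1)` turns the recursion into
`S_N = ∑_{d<r} X^{rd} S_{N-1-d}`, so `S_N = T_N(X^r)` with `T_N = ∑_{d<r} Y^d T_{N-1-d}`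
(`revRBon r N`).
Since `(1 + ⋯ + Y^{r-1})^{a+1} = (1 + ⋯ + Y^{r-1})^a (1 + ⋯ + Y^{r-1})`, the coefficient of `Y^j`
in `T_{n+1}` is `C_r(n - j, j)`. On the other side `∏_l (X - c w^l) = X^r - c^r`, so the hypothesis
reads `R_{rn} = X · F(X^r)` with `F = ∏_k (Y - x_k^r)`, and Vieta's formulas for `F` finish.
-/

open Polynomial Finset

lemma rnomial_zero_left (r j : ℕ) : rnomial r 0 j = if j = 0 then 1 else 0 := by
  simp [rnomial, coeff_one]

lemma rnomial_succ (r a j : ℕ) :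
    rnomial r (a + 1) j = ∑ d ∈ range r, if d ≤ j then rnomial r a (j - d) else 0 := by
  simp only [rnomial, pow_succ, mul_sum, finsetSum_coeff, coeff_mul_X_pow']

noncomputable def revRBon (r : ℕ) : ℕ → ℂ[X]
  | 0 => 0
  | 1 => 1
  | n + 2 => ∑ d ∈ range r, X ^ d * revRBon r (n + 1 - d)

lemma coeff_revRBon_succ (r n j : ℕ) : (revRBon r (n + 1)).coeff j = rnomial r (n - j) j := by
  induction n using Nat.strong_induction_on generalizing j with
  | _ n ih =>
    rcases n with _ | n
    · simp [revRBon, rnomial_zero_left, coeff_one]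
    have hterm : ∀ d ∈ range r, (X ^ d * revRBon r (n + 1 - d)).coeff j
        = if d ≤ j ∧ d ≤ n then (rnomial r (n - j) (j - d) : ℂ) else 0 := by
      intro d _
      rw [coeff_X_pow_mul']
      by_cases hdn : d ≤ n
      · obtain ⟨e, rfl⟩ : ∃ e, n = d + e := ⟨n - d, by omega⟩
        rw [show d + e + 1 - d = e + 1 by omega]
        split_ifs with h1 h2 h2
        · rw [ih e (by omega), show d + e - j = e - (j - d) by omega]
        all_goals grind
      · rw [show n + 1 - d = 0 by omega]
        simp [revRBon, hdn]
    rw [revRBon, finsetSum_coeff, sum_congr rfl hterm]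
    by_cases hjn : j ≤ n
    · rw [show n + 1 - j = n - j + 1 by omega, rnomial_succ]
      push_cast
      refine sum_congr rfl fun d _ => ?_
      grind
    · rw [show n + 1 - j = 0 by omega, rnomial_zero_left, if_neg (by omega), Nat.cast_zero]
      refine sum_eq_zero fun d _ => ?_
      split_ifs with h
      · rw [show n - j = 0 by omega, rnomial_zero_left, if_neg (by omega), Nat.cast_zero]
      · rfl

lemma natDegree_RBon_le (r N : ℕ) : (RBon r N).natDegree ≤ (r - 1) * (N - 1) := by
  induction N using Nat.strong_induction_on with
  | _ N ih =>
    match N with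
    | 0 => simp [RBon]
    | 1 => simp [RBon]
    | n + 2 =>
      rw [RBon, sum_attach (range r) fun i => X ^ i * RBon r (n + 2 - (r - i))]
      refine natDegree_sum_le_of_forall_le _ _ fun i hi => ?_
      obtain ⟨s, rfl⟩ : ∃ s, r = i + 1 + s := ⟨r - i - 1, by simp at hi; omega⟩
      refine natDegree_mul_le.trans (add_le_add (natDegree_X_pow_le i)
        (ih _ (by omega))) |>.trans ?_
      rw [show i + 1 + s - 1 = i + s by omega, show n + 2 - 1 = n + 1 by omega]
      rcases Nat.lt_or_ge n s with h | h
      · rw [show n + 2 - (i + 1 + s - i) - 1 = 0 by omega]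
        nlinarith
      · obtain ⟨a, rfl⟩ : ∃ a, n = s + a := ⟨n - s, by omega⟩
        rw [show s + a + 2 - (i + 1 + s - i) - 1 = a by omega]
        nlinarith

lemma Polynomial.reflect_sum {R ι : Type*} [Semiring R] (s : Finset ι) (f : ι → R[X]) (N : ℕ) :
    reflect N (∑ i ∈ s, f i) = ∑ i ∈ s, reflect N (f i) :=
  map_sum ({ toFun := reflect N, map_zero' := reflect_zero, map_add' := (reflect_add · · N) } :
    R[X] →+ R[X]) f s

lemma Polynomial.reflect_X_pow_mul {R : Type*} [Semiring R] {f : R[X]} {M : ℕ}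
    (hf : f.natDegree ≤ M) (i k : ℕ) : reflect (i + k + M) (X ^ i * f) = X ^ k * reflect M f := by
  rw [reflect_mul _ _ ((natDegree_X_pow_le i).trans (Nat.le_add_right i k)) hf, reflect_monomial,
    revAt_le (Nat.le_add_right i k), Nat.add_sub_cancel_left]

lemma reflect_RBon (r N : ℕ) :
    reflect ((r - 1) * (N - 1)) (RBon r N) = expand ℂ r (revRBon r N) := by
  induction N using Nat.strong_induction_on with
  | _ N ih =>
    match N with
    | 0 => simp [RBon, revRBon]
    | 1 => simp [RBon, revRBon, reflect_one]
    | n + 2 =>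
      rw [RBon, revRBon, sum_attach (range r) fun i => X ^ i * RBon r (n + 2 - (r - i)),
        reflect_sum, map_sum, ← sum_range_reflect _ r]
      refine sum_congr rfl fun i hi => ?_
      obtain ⟨s, rfl⟩ : ∃ s, r = i + 1 + s := ⟨r - i - 1, by simp at hi; omega⟩
      rw [show i + 1 + s - 1 - i = s by omega, show i + 1 + s - s = i + 1 by omega,
        map_mul, map_pow, expand_X, ← pow_mul]
      rcases Nat.lt_or_ge n i with h | h
      · rw [show n + 2 - (i + 1) = 0 by omega, show n + 1 - i = 0 by omega]
        simp [RBon, revRBon]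
      · obtain ⟨a, rfl⟩ : ∃ a, n = i + a := ⟨n - i, by omega⟩
        have hdeg : (i + 1 + s - 1) * (i + a + 2 - 1)
            = s + (i + 1 + s) * i + (i + 1 + s - 1) * (a + 1 - 1) := by
          rw [show i + 1 + s - 1 = i + s by omega, show i + a + 2 - 1 = i + 1 + a by omega,
            Nat.add_sub_cancel]
          ring
        rw [show i + a + 2 - (i + 1) = a + 1 by omega, show i + a + 1 - i = a + 1 by omega, hdeg,
          reflect_X_pow_mul (natDegree_RBon_le _ _), ih (a + 1) (by omega)]

lemma coeff_RBon (r n j : ℕ) (hr : 0 < r) (hj : r * j ≤ (r - 1) * n) :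
    (RBon r (n + 1)).coeff ((r - 1) * n - r * j) = rnomial r (n - j) j := by
  have h := congrArg (coeff · (r * j)) (reflect_RBon r (n + 1))
  simpa only [coeff_reflect, Nat.add_sub_cancel, revAt_le hj, coeff_expand_mul' hr,
    coeff_revRBon_succ] using h

lemma Finset.prod_X_sub_C_coeff {R σ : Type*} [CommRing R] (s : Finset σ) (f : σ → R) {k : ℕ}
    (h : k ≤ #s) :
    (∏ i ∈ s, (X - C (f i))).coeff k
      = (-1) ^ (#s - k) * ∑ t ∈ s.powersetCard (#s - k), ∏ i ∈ t, f i := by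
  simp_rw [sub_eq_add_neg, ← map_neg C]
  rw [prod_X_add_C_coeff _ _ h, mul_sum]
  refine sum_congr rfl fun t ht => ?_
  rw [prod_neg, (mem_powersetCard.mp ht).2]

theorem stmt_0 (r n : ℕ) (hr : 2 ≤ r) (hn : 1 ≤ n)
    (m : ℕ) (hm : m = (r - 1) * n - 1)
    (w : ℂ) (hw : w = Complex.exp (2 * Real.pi * Complex.I / r))
    (x : Fin m → ℂ)
    (hfac : RBon r (r * n) =
      Polynomial.X * ∏ k : Fin m, ∏ l ∈ Finset.range r,
        (Polynomial.X - Polynomial.C (x k * w ^ l))) :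
    ∀ j : ℕ, j ≤ m →
      ∑ s ∈ Finset.powersetCard j (Finset.univ : Finset (Fin m)), ∏ k ∈ s, x k ^ r
        = (-1) ^ j * (rnomial r (r * n - j - 1) j : ℂ) := by
  intro j hj
  have hr0 : 0 < r := by omega
  have hroot : IsPrimitiveRoot w r := hw ▸ Complex.isPrimitiveRoot_exp r hr0.ne'
  have hRBon : RBon r (r * n) = X * expand ℂ r (∏ k : Fin m, (X - C (x k ^ r))) := by
    rw [hfac, map_prod]
    refine congrArg _ (prod_congr rfl fun k _ => ?_)
    simp_rw [map_sub, expand_X, expand_C, X_pow_sub_C_eq_prod hroot hr0 rfl, mul_comm]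
  have hrn : 1 ≤ r * n := by nlinarith
  have hdeg : (r - 1) * (r * n - 1) = r * m + 1 := by
    have hm1 : 1 ≤ (r - 1) * n := by nlinarith [Nat.sub_add_cancel (show 1 ≤ r by omega)]
    subst hm
    zify [hrn, hm1, (show 1 ≤ r by omega)]
    ring
  have hrj : r * j ≤ r * m := Nat.mul_le_mul_left r hj
  have key := coeff_RBon r (r * n - 1) j hr0 (by omega)
  rw [Nat.sub_add_cancel hrn, hdeg, show r * m + 1 - r * j = r * (m - j) + 1 by
    rw [Nat.mul_sub]; omega, hRBon, coeff_X_mul, coeff_expand_mul' hr0,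
    prod_X_sub_C_coeff _ _ (by simp), card_univ, Fintype.card_fin, Nat.sub_sub_self hj] at key
  rw [Nat.sub_right_comm, ← key, ← mul_assoc, ← mul_pow]
  norm_num
end

section
/- Let r ≥ 2 be an integer and let p ∈ {0, 1}. Every nonzero complex root x of the R-Bonacci polynomial R_{r+p} satisfies x^r = -1. -/
open Polynomial Finset

lemma RBon_unfold (r n : ℕ) :
    RBon r (n+2) = ∑ i ∈ range r, X ^ i * RBon r (n + 2 - (r - i)) := by
  rw [RBon]
  exact Finset.sum_attach (Finset.range r) (fun j => X^j * RBon r (n+2 - (r - j)))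

lemma RBon_formula (r : ℕ) : ∀ m, m + 1 ≤ r →
    RBon r (m + 2) = X ^ (r - 1 - m) * (X ^ r + 1) ^ m := by
  intro m
  induction m using Nat.strong_induction_on with
  | _ m ih =>
    intro hm
    rw [RBon_unfold]
    rw [range_eq_Ico, ← Finset.sum_Ico_consecutive _ (Nat.zero_le (r - 1 - m)) (by omega : r - 1 - m ≤ r)]
    have h1 : ∑ i ∈ Finset.Ico 0 (r - 1 - m), X ^ i * RBon r (m + 2 - (r - i)) = 0 := by
      apply Finset.sum_eq_zero
      intro i hi
      rw [Finset.mem_Ico] at hi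
      have : m + 2 - (r - i) = 0 := by omega
      rw [this, show RBon r 0 = 0 by rw [RBon], mul_zero]
    rw [h1, zero_add, Finset.sum_Ico_eq_sum_range]
    have h2 : r - (r - 1 - m) = m + 1 := by omega
    rw [h2, Finset.sum_range_succ']
    have h3 : m + 2 - (r - (r - 1 - m + 0)) = 1 := by omega
    rw [h3]
    have h4 : ∀ i ∈ Finset.range m,
        X ^ (r - 1 - m + (i + 1)) * RBon r (m + 2 - (r - (r - 1 - m + (i + 1))))
        = X ^ (r - 1 - m) * (X ^ r * (X ^ r + 1) ^ i) := by
      intro i hi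
      rw [Finset.mem_range] at hi
      have ha : m + 2 - (r - (r - 1 - m + (i + 1))) = i + 2 := by omega
      rw [ha, ih i hi (by omega)]
      have hb : (X : ℂ[X]) ^ (r - 1 - m + (i + 1)) * X ^ (r - 1 - i) = X ^ (r - 1 - m) * X ^ r := by
        rw [← pow_add, ← pow_add]; congr 1; omega
      rw [← mul_assoc, hb, mul_assoc]
    rw [Finset.sum_congr rfl h4, ← Finset.mul_sum, ← Finset.mul_sum]
    have h5 : (X ^ r : ℂ[X]) * ∑ i ∈ Finset.range m, (X ^ r + 1) ^ i = (X ^ r + 1) ^ m - 1 := by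
      have := geom_sum_mul (X ^ r + 1 : ℂ[X]) m
      rw [add_sub_cancel_right] at this
      rw [mul_comm, this]
    rw [h5, show RBon r 1 = 1 by rw [RBon], Nat.add_zero, mul_one]
    ring

theorem stmt_4 (r : ℕ) (hr : 2 ≤ r) (p : ℕ) (hp : p ≤ 1) :
    ∀ x : ℂ, x ≠ 0 → (RBon r (r + p)).IsRoot x → x ^ r = -1 := by
  intro x hx hroot
  have hm : r + p = (r + p - 2) + 2 := by omega
  rw [hm, RBon_formula r (r + p - 2) (by omega)] at hroot
  rw [Polynomial.IsRoot, eval_mul, eval_pow, eval_pow, eval_add, eval_pow, eval_one, eval_X] at hroot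
  rcases mul_eq_zero.1 hroot with h | h
  · exact absurd (pow_eq_zero_iff'.mp h).1 hx
  · rcases Nat.eq_zero_or_pos (r + p - 2) with h0 | h0
    · rw [h0, pow_zero] at h; exact absurd h one_ne_zero
    · have := pow_eq_zero_iff h0.ne' |>.mp h
      linear_combination this
end

section
/- Let r ≥ 2 be an integer. The R-Bonacci polynomial with index r + 1 satisfies the identity R_{r+1}(X) = (X^r + 1)^{r-1} in ℂ[X]. -/
open Polynomial Finset in
lemma key (r : ℕ) (hr : 2 ≤ r) : ∀ m, m ≤ r - 1 →
    RBon r (m + 2) = X ^ (r - 1 - m) * ((X : ℂ[X]) ^ r + 1) ^ m := by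
  intro m
  induction m using Nat.strong_induction_on with
  | _ m ih =>
    intro hm
    rw [RBon]
    rw [Finset.sum_attach (Finset.range r)
      (fun i => (X : ℂ[X]) ^ i * RBon r (m + 2 - (r - i)))]
    rw [Finset.range_eq_Ico,
      ← Finset.sum_Ico_consecutive _ (Nat.zero_le (r - m - 1)) (show r - m - 1 ≤ r by omega)]
    have h0 : ∑ i ∈ Finset.Ico 0 (r - m - 1),
        (X : ℂ[X]) ^ i * RBon r (m + 2 - (r - i)) = 0 := by
      refine Finset.sum_eq_zero fun i hi => ?_
      rw [Finset.mem_Ico] at hi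
      have hz : m + 2 - (r - i) = 0 := by omega
      rw [hz, RBon, mul_zero]
    rw [h0, zero_add, Finset.sum_Ico_eq_sum_range,
      show r - (r - m - 1) = m + 1 by omega]
    have hc : ∀ j ∈ Finset.range (m + 1),
        (X : ℂ[X]) ^ (r - m - 1 + j) * RBon r (m + 2 - (r - (r - m - 1 + j))) =
        (X : ℂ[X]) ^ (r - m - 1 + j) * RBon r (j + 1) := by
      intro j hj
      rw [Finset.mem_range] at hj
      rw [show m + 2 - (r - (r - m - 1 + j)) = j + 1 by omega]
    rw [Finset.sum_congr rfl hc, Finset.sum_range_succ']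
    have hc2 : ∀ j ∈ Finset.range m,
        (X : ℂ[X]) ^ (r - m - 1 + (j + 1)) * RBon r (j + 1 + 1) =
        (X : ℂ[X]) ^ (r - 1 - m) * ((X : ℂ[X]) ^ r * ((X : ℂ[X]) ^ r + 1) ^ j) := by
      intro j hj
      rw [Finset.mem_range] at hj
      rw [show j + 1 + 1 = j + 2 from rfl, ih j (by omega) (by omega),
        ← mul_assoc, ← pow_add, show r - m - 1 + (j + 1) + (r - 1 - j) = (r - 1 - m) + r by omega,
        pow_add, mul_assoc]
    rw [Finset.sum_congr rfl hc2, show r - m - 1 + 0 = r - 1 - m by omega,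
      RBon, mul_one, ← Finset.mul_sum, ← Finset.mul_sum]
    have geo : ((X : ℂ[X]) ^ r) * ∑ j ∈ Finset.range m, ((X : ℂ[X]) ^ r + 1) ^ j
        = ((X : ℂ[X]) ^ r + 1) ^ m - 1 := by
      have h := geom_sum_mul ((X : ℂ[X]) ^ r + 1) m
      linear_combination h
    linear_combination (X : ℂ[X]) ^ (r - 1 - m) * geo

theorem stmt_6 (r : ℕ) (hr : 2 ≤ r) :
    RBon r (r + 1) = (Polynomial.X ^ r + 1) ^ (r - 1) := by
  have h := key r hr (r - 1) le_rfl
  rw [show r - 1 + 2 = r + 1 by omega, show r - 1 - (r - 1) = 0 by omega, pow_zero, one_mul] at h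
  exact h
end

section
/- Let r ≥ 2, n ≥ 1, and k ≥ 1 be integers with k ≤ (r-1)n, let p ∈ {0, 1, ..., r-1}, and set t = rk - (1-p)(r-1), η = (r-1)n - k, D = (r-1)(rn+p-1), and μ = D(D-1)···(D-t+1) (the falling factorial of D of length t). Let w = e^{2πi/r} and suppose x_1, ..., x_η are complex numbers such that the t-th derivative of the R-Bonacci polynomial factors as R_{rn+p}^{(t)}(X) = μ · ∏_{k=1}^{η} ∏_{l=0}^{r-1} (X - x_k w^l). Then for every j with 0 ≤ j ≤ η, μ · σ_j(x_1^r, ..., x_η^r) = (-1)^j · (D - rj)(D - rj - 1)···(D - rj - t + 1) · C_r(rn + p - j - 1, j). -/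
open Polynomial Finset


lemma RBon_succ (r n : ℕ) : RBon r (n+2) = ∑ i ∈ (Finset.range r).attach,
    Polynomial.X ^ (i:ℕ) * RBon r (n + 2 - (r - (i:ℕ))) := by rw [RBon]

lemma RBon_coeff_succ (r n s : ℕ) : (RBon r (n+2)).coeff s = ∑ i ∈ Finset.range r,
    if i ≤ s then (RBon r (n + 2 - (r - i))).coeff (s - i) else 0 := by
  rw [RBon_succ, Polynomial.finset_sum_coeff]
  have h : ∑ b ∈ (range r).attach, (X ^ (b:ℕ) * RBon r (n + 2 - (r - (b:ℕ)))).coeff s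
      = ∑ i ∈ range r, (X ^ i * RBon r (n + 2 - (r - i))).coeff s :=
    Finset.sum_attach _ fun i => (X ^ i * RBon r (n + 2 - (r - i))).coeff s
  rw [h]
  refine Finset.sum_congr rfl fun i _ => ?_
  rw [Polynomial.X_pow_mul, Polynomial.coeff_mul_X_pow']

lemma RBon_coeff_zero (r : ℕ) (hr : 2 ≤ r) : ∀ m s : ℕ, (r-1)*m < s + (r-1) →
    (RBon r m).coeff s = 0 := by
  intro m
  induction m using Nat.strong_induction_on with
  | _ m ih =>
    match m with
    | 0 => intro s _; simp [RBon]
    | 1 =>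
      intro s h
      rw [mul_one] at h
      have hs : s ≠ 0 := by omega
      simp [RBon, Polynomial.coeff_one, hs]
    | n+2 =>
      intro s h
      rw [RBon_coeff_succ]
      apply Finset.sum_eq_zero
      intro i hi
      rw [Finset.mem_range] at hi
      split
      · next his =>
        apply ih _ (by omega)
        rcases Nat.lt_or_ge (n+2) (r-i) with hc | hc
        · rw [Nat.sub_eq_zero_of_le (le_of_lt hc), mul_zero]
          omega
        · -- r - i ≤ n + 2
          have e1 : (r-1)*(n+2) = (r-1)*(n+2-(r-i)) + (r-1)*(r-i) := by
            rw [← Nat.mul_add]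
            congr 1
            omega
          have e2 : i ≤ (r-1)*(r-i) := by
            calc i ≤ (r-1) * 1 := by omega
            _ ≤ (r-1)*(r-i) := Nat.mul_le_mul_left _ (by omega)
          zify at e1 e2 h ⊢
          omega
      · rfl

lemma rnomial_zero (r a c : ℕ) (h : (r-1)*a < c) : rnomial r a c = 0 := by
  apply Polynomial.coeff_eq_zero_of_natDegree_lt
  calc ((∑ i ∈ Finset.range r, (Polynomial.X : Polynomial ℕ) ^ i) ^ a).natDegree
      ≤ a * (∑ i ∈ Finset.range r, (Polynomial.X : Polynomial ℕ) ^ i).natDegree :=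
        Polynomial.natDegree_pow_le
    _ ≤ a * (r-1) := by
        apply Nat.mul_le_mul_left
        apply Polynomial.natDegree_sum_le_of_forall_le
        intro i hi
        rw [Finset.mem_range] at hi
        rw [Polynomial.natDegree_X_pow]
        omega
    _ < c := by rw [Nat.mul_comm]; exact h

lemma rnomial_rec (r a j : ℕ) : rnomial r (a+1) j =
    ∑ i ∈ Finset.range r, if i ≤ j then rnomial r a (j - i) else 0 := by
  unfold rnomial
  rw [pow_succ', Finset.sum_mul, Polynomial.finset_sum_coeff]
  refine Finset.sum_congr rfl fun i _ => ?_
  rw [Polynomial.X_pow_mul, Polynomial.coeff_mul_X_pow']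

lemma RBon_coeff (r : ℕ) (hr : 2 ≤ r) : ∀ m s j a : ℕ, m = a + j + 1 →
    s + r*j = (r-1)*(a+j) → (RBon r m).coeff s = (rnomial r a j : ℂ) := by
  intro m
  induction m using Nat.strong_induction_on with
  | _ m ih =>
    match m with
    | 0 => intro s j a hm hs; omega
    | 1 =>
      intro s j a hm hs
      have ha : a = 0 := by omega
      have hj : j = 0 := by omega
      have hss : s = 0 := by
        subst ha hj; simpa using hs
      subst ha hj hss
      simp [RBon, rnomial]
    | n+2 =>
      intro s j a hm hs
      -- a ≥ 1
      have e0 : (r-1)*(a+j) + (a+j) = r*(a+j) := by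
        have : r - 1 + 1 = r := by omega
        calc (r-1)*(a+j) + (a+j) = (r-1+1)*(a+j) := by ring
          _ = r*(a+j) := by rw [this]
      obtain ⟨b, rfl⟩ : ∃ b, a = b + 1 := by
        rcases a with _ | b
        · exfalso
          have : r * j = r * (0 + j) := by ring
          omega
        · exact ⟨b, rfl⟩
      rw [RBon_coeff_succ, rnomial_rec]
      push_cast
      have hrefl := Finset.sum_range_reflect
        ((fun i => if i ≤ s then (RBon r (n + 2 - (r - i))).coeff (s - i) else (0:ℂ)) : ℕ → ℂ) r
      rw [← hrefl]
      refine Finset.sum_congr rfl fun d hd => ?_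
      rw [Finset.mem_range] at hd
      have hrd : r - (r - 1 - d) = d + 1 := by omega
      rw [hrd]
      have hs' : (s:ℤ) + r*j = ((r:ℤ)-1)*(b+1+j) := by
        zify [show 1 ≤ r by omega] at hs
        linarith [hs]
      have ering : ((r:ℤ)-1)*(b+1+j) = ((r:ℤ)-1)*b + ((r:ℤ)-1)*j + (r-1) := by ring
      have ering2 : (r:ℤ)*j = ((r:ℤ)-1)*j + j := by ring
      by_cases hdj : d ≤ j
      · by_cases hds : r - 1 - d ≤ s
        · rw [if_pos hds, if_pos hdj]
          apply ih (n + 2 - (d+1)) (by omega) _ (j - d) b (by omega)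
          -- (s-(r-1-d)) + r*(j-d) = (r-1)*(b + (j-d))
          zify [hds, hdj, show d ≤ r - 1 by omega, show 1 ≤ r by omega,
            show d + 1 ≤ n + 2 by omega]
          have h1 : (r:ℤ)*((j:ℤ)-d) = r*j - r*d := by ring
          have h2 : ((r:ℤ)-1)*((b:ℤ)+(j-d)) = (r-1)*(b+1+j) - (r-1)*d - (r-1) := by ring
          have h3 : (r:ℤ)*d = ((r:ℤ)-1)*d + d := by ring
          omega
        · rw [if_neg hds, if_pos hdj]
          symm
          norm_cast
          apply rnomial_zero
          zify [hdj, show 1 ≤ r by omega]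
          omega
      · rw [if_neg hdj]
        by_cases hds : r - 1 - d ≤ s
        · rw [if_pos hds]
          apply RBon_coeff_zero r hr
          rcases Nat.lt_or_ge (n+2) (d+1) with hc | hc
          · rw [Nat.sub_eq_zero_of_le (le_of_lt hc), mul_zero]
            omega
          · have h4 : ((r:ℤ)-1)*((n:ℤ)+2-(d+1)) = (r-1)*(b+1+j) - (r-1)*d := by
              have : (n:ℤ) + 2 = (b:ℤ) + 1 + j + 1 := by exact_mod_cast congrArg Nat.cast hm
              rw [this]; ring
            zify [hds, hc, show d ≤ r - 1 by omega, show 1 ≤ r by omega]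
            have h3 : (r:ℤ)*d = ((r:ℤ)-1)*d + d := by ring
            have h6 : (r:ℤ)*j + r ≤ r*d := by
              have hjd : (j:ℤ) + 1 ≤ d := by omega
              nlinarith [hjd]
            omega
        · rw [if_neg hds]

theorem stmt_7 (r n k : ℕ) (hr : 2 ≤ r) (hn : 1 ≤ n) (hk : 1 ≤ k)
    (hk2 : k ≤ (r - 1) * n)
    (p : ℕ) (hp : p ≤ r - 1)
    (t : ℕ) (ht : (t : ℤ) = (r : ℤ) * k - (1 - (p : ℤ)) * ((r : ℤ) - 1))
    (η : ℕ) (hη : η = (r - 1) * n - k)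
    (D : ℕ) (hD : D = (r - 1) * (r * n + p - 1))
    (μ : ℕ) (hμ : μ = D.descFactorial t)
    (w : ℂ) (hw : w = Complex.exp (2 * Real.pi * Complex.I / r))
    (x : Fin η → ℂ)
    (hfac : Polynomial.derivative^[t] (RBon r (r * n + p)) =
      Polynomial.C (μ : ℂ) * ∏ i : Fin η, ∏ l ∈ Finset.range r,
        (Polynomial.X - Polynomial.C (x i * w ^ l))) :
    ∀ j : ℕ, j ≤ η →
      (μ : ℂ) * ∑ s ∈ Finset.powersetCard j (Finset.univ : Finset (Fin η)), ∏ i ∈ s, x i ^ r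
        = (-1) ^ j * ((D - r * j).descFactorial t : ℂ) * (rnomial r (r * n + p - j - 1) j : ℂ) := by
  intro j hj
  have hrpos : 0 < r := by omega
  have hrn2 : 2 ≤ r * n := by
    calc 2 = 2 * 1 := rfl
    _ ≤ r * n := Nat.mul_le_mul hr hn
  have hsplit : (r-1)*n + n = r*n := by
    calc (r-1)*n + n = ((r-1)+1)*n := by ring
    _ = r*n := by rw [show r-1+1 = r from by omega]
  have hDt : (D:ℤ) = r*η + t := by
    rw [hD, hη, ht]
    push_cast [Nat.cast_sub hk2, Nat.cast_sub (show 1 ≤ r*n+p by omega),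
      Nat.cast_sub (show 1 ≤ r by omega)]
    ring
  have hDn : D = r*η + t := by exact_mod_cast hDt
  have hjm : j + 1 ≤ r*n + p := by omega
  have hrjη : r*j ≤ r*η := Nat.mul_le_mul_left r hj
  have hrjD : r*j ≤ D := by omega
  have hexp : r*(η-j) + t = D - r*j := by
    zify [hj, hrjD]
    rw [hDt]; ring
  -- coefficient extraction
  have hc : (Polynomial.derivative^[t] (RBon r (r*n+p))).coeff (r*(η-j)) =
      (Polynomial.C (μ:ℂ) * ∏ i : Fin η, ∏ l ∈ Finset.range r,
        (Polynomial.X - Polynomial.C (x i * w ^ l))).coeff (r*(η-j)) := by rw [hfac]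
  rw [Polynomial.coeff_iterate_derivative, hexp] at hc
  -- LHS of hc
  have hRB : (RBon r (r*n+p)).coeff (D - r*j) = (rnomial r (r*n+p-j-1) j : ℂ) := by
    apply RBon_coeff r hr (r*n+p) _ j (r*n+p-j-1) (by omega)
    have h1 : r*n+p-j-1+j = r*n+p-1 := by omega
    rw [h1, ← hD]
    omega
  rw [hRB] at hc
  -- RHS of hc
  have hprim : IsPrimitiveRoot w r := by
    rw [hw]; exact Complex.isPrimitiveRoot_exp r (by omega)
  have hinner : ∀ c : ℂ, (∏ l ∈ Finset.range r, (Polynomial.X - Polynomial.C (c * w^l)))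
      = Polynomial.X^r - Polynomial.C (c^r) := by
    intro c
    rw [X_pow_sub_C_eq_prod hprim hrpos (rfl : c^r = c^r)]
    exact Finset.prod_congr rfl fun l _ => by rw [mul_comm]
  have hprod : (∏ i : Fin η, ∏ l ∈ Finset.range r,
      (Polynomial.X - Polynomial.C (x i * w ^ l)))
      = Polynomial.expand ℂ r (∏ i : Fin η, (Polynomial.X - Polynomial.C (x i ^ r))) := by
    rw [map_prod]
    refine Finset.prod_congr rfl fun i _ => ?_
    rw [hinner, map_sub, Polynomial.expand_X, Polynomial.expand_C]
  rw [hprod, Polynomial.coeff_C_mul, Polynomial.coeff_expand hrpos,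
    if_pos (dvd_mul_right r (η-j)), Nat.mul_div_cancel_left _ hrpos] at hc
  have hv : (∏ i : Fin η, (Polynomial.X - Polynomial.C (x i ^ r))).coeff (η - j) =
      (-1)^j * ∑ s ∈ Finset.powersetCard j (Finset.univ : Finset (Fin η)), ∏ i ∈ s, x i ^ r := by
    have h1 : ∀ i : Fin η, Polynomial.X - Polynomial.C (x i ^ r)
        = Polynomial.X + Polynomial.C (-(x i ^ r)) := fun i => by
      rw [map_neg, sub_eq_add_neg]
    simp_rw [h1]
    rw [Finset.prod_X_add_C_coeff _ _ (show η - j ≤ (Finset.univ : Finset (Fin η)).card by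
      simpa using Nat.sub_le η j)]
    rw [show (Finset.univ : Finset (Fin η)).card - (η - j) = j from by
      rw [Finset.card_univ, Fintype.card_fin]; omega]
    rw [Finset.mul_sum]
    refine Finset.sum_congr rfl fun u hu => ?_
    have hcard : u.card = j := (Finset.mem_powersetCard.mp hu).2
    have h2 : ∏ i ∈ u, -x i ^ r = ∏ i ∈ u, ((-1:ℂ) * x i ^ r) :=
      Finset.prod_congr rfl fun i _ => by ring
    rw [h2, Finset.prod_mul_distrib, Finset.prod_const, hcard]
  rw [hv, nsmul_eq_mul] at hc
  have hsq : ((-1:ℂ))^j * (-1)^j = 1 := by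
    rw [← pow_add, ← two_mul, pow_mul]; norm_num
  linear_combination (-((-1:ℂ)^j)) * hc - ((μ:ℂ) * ∑ s ∈ Finset.powersetCard j
    (Finset.univ : Finset (Fin η)), ∏ i ∈ s, x i ^ r) * hsq
end

section
/- Let r ≥ 2, n ≥ 1, and k ≥ 1 be integers with k ≤ (r-1)n, let p ∈ {0, 1, ..., r-1}, and set t = rk - (1-p)(r-1), η = (r-1)n - k, D = (r-1)(rn+p-1), and μ = D(D-1)···(D-t+1) (the falling factorial of D of length t). Let w = e^{2πi/r} and suppose x_1, ..., x_η are complex numbers such that R_{rn+p}^{(t)}(X) = μ · ∏_{k=1}^{η} ∏_{l=0}^{r-1} (X - x_k w^l). Then μ · ∑_{k=1}^{η} x_k^r = -(D - r)(D - r - 1)···(D - r - t + 1) · C_r(rn + p - 2, 1). -/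
open Polynomial

lemma RBon_zero (r : ℕ) : RBon r 0 = 0 := by rw [RBon]

open Polynomial in
lemma RBon_one (r : ℕ) : RBon r 1 = 1 := by rw [RBon]

open Polynomial in
lemma RBon_succ_succ (r n : ℕ) :
    RBon r (n + 2) = ∑ i ∈ Finset.range r, X ^ i * RBon r (n + 2 - (r - i)) := by
  rw [RBon]
  exact Finset.sum_attach _ (fun i => X ^ i * RBon r (n + 2 - (r - i)))

lemma coeff_X_pow_mul'' (p : Polynomial ℂ) (i e : ℕ) :
    (X ^ i * p).coeff e = if i ≤ e then p.coeff (e - i) else 0 := by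
  rw [Polynomial.X_pow_mul, Polynomial.coeff_mul_X_pow']

lemma RBon_natDegree_le (r : ℕ) : ∀ m, (RBon r m).natDegree ≤ (r - 1) * (m - 1) := by
  intro m
  induction m using Nat.strong_induction_on with
  | _ m ih =>
    match m with
    | 0 => simp [RBon_zero]
    | 1 => simp [RBon_one]
    | n + 2 =>
      rw [RBon_succ_succ]
      apply Polynomial.natDegree_sum_le_of_forall_le
      intro i hi
      rw [Finset.mem_range] at hi
      refine le_trans natDegree_mul_le ?_
      have h1 : (X ^ i : Polynomial ℂ).natDegree = i := natDegree_X_pow i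
      have h2 := ih (n + 2 - (r - i)) (by omega)
      have e1 : n + 2 - (r - i) - 1 = n + 1 - (r - i) := by omega
      rw [e1] at h2
      rw [h1, show n + 2 - 1 = n + 1 from rfl]
      have h3 : (r-1) * (n + 1 - (r - i)) = (r-1) * (n+1) - (r-1) * (r-i) := Nat.mul_sub _ _ _
      have h4 : (r-1) * 1 ≤ (r-1) * (r - i) := Nat.mul_le_mul_left _ (by omega)
      have h6 : (r-1) * 1 ≤ (r-1) * (n+1) := Nat.mul_le_mul_left _ (by omega)
      rw [h3] at h2
      generalize hA : (r-1) * (n+1) = A at h2 h6 ⊢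
      generalize hB : (r-1) * (r-i) = B at h2 h4
      omega

lemma RBon_coeff_eq_zero (r m j : ℕ) (h : (r - 1) * (m - 1) < j) : (RBon r m).coeff j = 0 :=
  Polynomial.coeff_eq_zero_of_natDegree_lt (lt_of_le_of_lt (RBon_natDegree_le r m) h)

lemma RBon_coeff_top (r : ℕ) (hr : 2 ≤ r) :
    ∀ m, 1 ≤ m → (RBon r m).coeff ((r - 1) * (m - 1)) = 1 := by
  intro m
  induction m using Nat.strong_induction_on with
  | _ m ih =>
    match m with
    | 0 => intro h; exact absurd h (by omega)
    | 1 => intro _; simp [RBon_one]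
    | n + 2 =>
      intro _
      rw [RBon_succ_succ, Polynomial.finset_sum_coeff]
      have hsplit := Finset.sum_range_succ
        (fun i => (X ^ i * RBon r (n + 2 - (r - i))).coeff ((r - 1) * (n + 2 - 1))) (r - 1)
      rw [show r - 1 + 1 = r from by omega] at hsplit
      rw [hsplit]
      have hzero : ∀ i ∈ Finset.range (r - 1),
          (X ^ i * RBon r (n + 2 - (r - i))).coeff ((r - 1) * (n + 2 - 1)) = 0 := by
        intro i hi
        rw [Finset.mem_range] at hi
        rw [coeff_X_pow_mul'']
        split
        · apply RBon_coeff_eq_zero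
          have e1 : n + 2 - (r - i) - 1 = n + 1 - (r - i) := by omega
          rw [e1, show n + 2 - 1 = n + 1 from rfl]
          have h3 : (r-1) * (n + 1 - (r - i)) = (r-1) * (n+1) - (r-1) * (r-i) := Nat.mul_sub _ _ _
          have h4 : (r-1) * 2 ≤ (r-1) * (r - i) := Nat.mul_le_mul_left _ (by omega)
          have h6 : (r-1) * 1 ≤ (r-1) * (n+1) := Nat.mul_le_mul_left _ (by omega)
          rw [h3]
          generalize hA : (r-1) * (n+1) = A at h6 ⊢
          generalize hB : (r-1) * (r-i) = B at h4 ⊢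
          omega
        · rfl
      rw [Finset.sum_eq_zero hzero, zero_add]
      rw [show n + 2 - (r - (r - 1)) = n + 1 from by omega]
      rw [coeff_X_pow_mul'']
      have hmul : (r - 1) * (n + 2 - 1) = (r - 1) * n + (r - 1) := by
        rw [show n + 2 - 1 = n + 1 from rfl, Nat.mul_succ]
      rw [if_pos (by omega : r - 1 ≤ (r - 1) * (n + 2 - 1))]
      rw [show (r - 1) * (n + 2 - 1) - (r - 1) = (r - 1) * (n + 1 - 1) from by
        rw [hmul, show n + 1 - 1 = n from rfl]; omega]
      exact ih (n + 1) (by omega) (by omega)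

lemma RBon_coeff_sub (r : ℕ) (hr : 2 ≤ r) :
    ∀ m, 2 ≤ m → (RBon r m).coeff ((r - 1) * (m - 1) - r) = ((m - 2 : ℕ) : ℂ) := by
  intro m
  induction m using Nat.strong_induction_on with
  | _ m ih =>
    match m with
    | 0 => intro h; exact absurd h (by omega)
    | 1 => intro h; exact absurd h (by omega)
    | 2 =>
      intro _
      rw [show (2:ℕ) - 2 = 0 from rfl, show ((r:ℕ) - 1) * (2 - 1) - r = 0 from by omega]
      rw [show (2:ℕ) = 0 + 2 from rfl, RBon_succ_succ, Polynomial.finset_sum_coeff]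
      rw [Nat.cast_zero]
      apply Finset.sum_eq_zero
      intro i hi
      rw [Finset.mem_range] at hi
      rw [coeff_X_pow_mul'']
      split
      · next h =>
        have hi0 : i = 0 := by omega
        subst hi0
        rw [show 0 + 2 - (r - 0) = 0 from by omega, RBon_zero]
        simp
      · rfl
    | 3 =>
      intro _
      rw [show (3:ℕ) - 2 = 1 from rfl, show ((r:ℕ) - 1) * (3 - 1) - r = r - 2 from by omega]
      rw [show (3:ℕ) = 1 + 2 from rfl, RBon_succ_succ, Polynomial.finset_sum_coeff]
      rw [Finset.sum_eq_single (r - 2)]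
      · rw [coeff_X_pow_mul'', if_pos (le_refl _), Nat.sub_self,
          show 1 + 2 - (r - (r - 2)) = 1 from by omega, RBon_one]
        simp
      · intro i hi hne
        rw [Finset.mem_range] at hi
        rw [coeff_X_pow_mul'']
        split
        · next h =>
          rw [show 1 + 2 - (r - i) = 0 from by omega, RBon_zero]
          simp
        · rfl
      · intro h
        exact absurd (Finset.mem_range.mpr (by omega)) h
    | (n + 4) =>
      intro _
      rw [RBon_succ_succ, Polynomial.finset_sum_coeff]
      set E := (r - 1) * (n + 4 - 1) - r with hE
      have hsplit := Finset.sum_range_succ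
        (fun i => (X ^ i * RBon r (n + 4 - (r - i))).coeff E) (r - 1)
      rw [show r - 1 + 1 = r from by omega] at hsplit
      have hsplit2 := Finset.sum_range_succ
        (fun i => (X ^ i * RBon r (n + 4 - (r - i))).coeff E) (r - 2)
      rw [show r - 2 + 1 = r - 1 from by omega] at hsplit2
      rw [hsplit, hsplit2]
      -- facts about E
      have hmul3 : (r-1) * (n + 4 - 1) = (r-1) * (n+1) + (r-1) * 2 := by
        rw [show n + 4 - 1 = (n+1) + 2 from rfl, Nat.mul_add]
      have hmul4 : (r-1) * (n + 4 - 1) = (r-1) * (n+2) + (r-1) * 1 := by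
        rw [show n + 4 - 1 = (n+2) + 1 from rfl, Nat.mul_add]
      have hC1 : (r-1) * 1 ≤ (r-1) * (n+1) := Nat.mul_le_mul_left _ (by omega)
      have hB2 : (r-1) * 2 ≤ (r-1) * (n+2) := Nat.mul_le_mul_left _ (by omega)
      -- small terms vanish
      have hzero : ∀ i ∈ Finset.range (r - 2),
          (X ^ i * RBon r (n + 4 - (r - i))).coeff E = 0 := by
        intro i hi
        rw [Finset.mem_range] at hi
        rw [coeff_X_pow_mul'']
        split
        · apply RBon_coeff_eq_zero
          have e1 : n + 4 - (r - i) - 1 = n + 3 - (r - i) := by omega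
          rw [e1, hE]
          have h3 : (r-1) * (n + 3 - (r - i)) = (r-1) * (n+3) - (r-1) * (r-i) := Nat.mul_sub _ _ _
          have h4 : (r-1) * 3 ≤ (r-1) * (r - i) := Nat.mul_le_mul_left _ (by omega)
          have h6 : (r-1) * 3 ≤ (r-1) * (n+3) := Nat.mul_le_mul_left _ (by omega)
          rw [h3, show n + 4 - 1 = n + 3 from rfl]
          generalize hA : (r-1) * (n+3) = A at h6 ⊢
          generalize hB : (r-1) * (r-i) = B at h4 ⊢
          omega
        · rfl
      rw [Finset.sum_eq_zero hzero, zero_add]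
      -- the i = r-2 term : leading coeff of RBon (n+2)
      have hterm2 : (X ^ (r-2) * RBon r (n + 4 - (r - (r-2)))).coeff E = 1 := by
        rw [show n + 4 - (r - (r - 2)) = n + 2 from by omega, coeff_X_pow_mul'']
        rw [if_pos (show r - 2 ≤ E from by
          rw [hE]
          generalize hA : (r-1) * (n + 4 - 1) = A at hmul3
          generalize hC : (r-1) * (n+1) = C at hmul3 hC1
          omega)]
        rw [show E - (r - 2) = (r - 1) * (n + 2 - 1) from by
          rw [hE, show n + 2 - 1 = n + 1 from rfl]
          generalize hA : (r-1) * (n + 4 - 1) = A at hmul3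
          generalize hC : (r-1) * (n+1) = C at hmul3 hC1
          omega]
        exact RBon_coeff_top r hr (n + 2) (by omega)
      rw [hterm2]
      -- the i = r-1 term : sub coeff of RBon (n+3)
      have hterm1 : (X ^ (r-1) * RBon r (n + 4 - (r - (r-1)))).coeff E
          = ((n + 3 - 2 : ℕ) : ℂ) := by
        rw [show n + 4 - (r - (r - 1)) = n + 3 from by omega, coeff_X_pow_mul'']
        rw [if_pos (show r - 1 ≤ E from by
          rw [hE]
          generalize hA : (r-1) * (n + 4 - 1) = A at hmul3
          generalize hC : (r-1) * (n+1) = C at hmul3 hC1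
          omega)]
        rw [show E - (r - 1) = (r - 1) * (n + 3 - 1) - r from by
          rw [hE, show n + 3 - 1 = n + 2 from rfl]
          generalize hA : (r-1) * (n + 4 - 1) = A at hmul4
          generalize hB : (r-1) * (n+2) = B at hmul4 hB2
          omega]
        exact ih (n + 3) (by omega) (by omega)
      rw [hterm1]
      rw [show ((n + 3 : ℕ) - 2 : ℕ) = n + 1 from rfl, show ((n + 4 : ℕ) - 2 : ℕ) = n + 2 from rfl]
      push_cast
      ring

lemma rnomial_aux (r : ℕ) (hr : 2 ≤ r) (N : ℕ) :
    ((∑ i ∈ Finset.range r, (Polynomial.X : Polynomial ℕ) ^ i) ^ N).coeff 1 = N := by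
  set q : Polynomial ℕ := ∑ i ∈ Finset.range r, (Polynomial.X : Polynomial ℕ) ^ i with hq
  have hq0 : q.coeff 0 = 1 := by
    rw [hq, Polynomial.finset_sum_coeff]
    simp_rw [Polynomial.coeff_X_pow]
    rw [Finset.sum_ite_eq (Finset.range r) 0 (fun _ => (1:ℕ))]
    rw [if_pos (Finset.mem_range.mpr (by omega))]
  have hq1 : q.coeff 1 = 1 := by
    rw [hq, Polynomial.finset_sum_coeff]
    simp_rw [Polynomial.coeff_X_pow]
    rw [Finset.sum_ite_eq (Finset.range r) 1 (fun _ => (1:ℕ))]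
    rw [if_pos (Finset.mem_range.mpr (by omega))]
  have hq0N : ∀ N, (q ^ N).coeff 0 = 1 := by
    intro N
    rw [Polynomial.coeff_zero_eq_eval_zero, Polynomial.eval_pow,
      ← Polynomial.coeff_zero_eq_eval_zero, hq0, one_pow]
  induction N with
  | zero => simp [Polynomial.coeff_one]
  | succ N ihN =>
    rw [pow_succ, Polynomial.coeff_mul, Finset.Nat.sum_antidiagonal_eq_sum_range_succ_mk]
    rw [Finset.sum_range_succ, Finset.sum_range_one]
    simp only [Nat.sub_zero, Nat.sub_self]
    rw [hq0N, hq1, hq0, ihN]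
    ring

lemma coeff_comp_X_pow (p : Polynomial ℂ) (r : ℕ) (hr : 0 < r) (m : ℕ) :
    (p.comp (X ^ r)).coeff (r * m) = p.coeff m := by
  rw [Polynomial.comp_eq_sum_left, Polynomial.sum_def, Polynomial.finset_sum_coeff]
  simp_rw [← pow_mul, Polynomial.coeff_C_mul, Polynomial.coeff_X_pow]
  have hcong : ∀ e ∈ p.support,
      p.coeff e * (if r * m = r * e then (1:ℂ) else 0) = if e = m then p.coeff e else 0 := by
    intro e _
    by_cases h : e = m
    · subst h; simp
    · rw [if_neg (fun hc => h (Nat.eq_of_mul_eq_mul_left hr hc.symm)), if_neg h, mul_zero]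
  rw [Finset.sum_congr rfl hcong, Finset.sum_ite_eq' p.support m]
  split
  · rfl
  · next h => exact (Polynomial.notMem_support_iff.mp h).symm

lemma prod_X_pow_sub_C (η r : ℕ) (a : Fin η → ℂ) :
    ∏ i : Fin η, (X ^ r - C (a i)) = (∏ i : Fin η, (X - C (a i))).comp (X ^ r) := by
  rw [Polynomial.prod_comp]
  apply Finset.prod_congr rfl
  intro i _
  rw [Polynomial.sub_comp, Polynomial.X_comp, Polynomial.C_comp]
theorem stmt_9 (r n k : ℕ) (hr : 2 ≤ r) (hn : 1 ≤ n) (hk : 1 ≤ k)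
    (hk2 : k ≤ (r - 1) * n)
    (p : ℕ) (hp : p ≤ r - 1)
    (t : ℕ) (ht : (t : ℤ) = (r : ℤ) * k - (1 - (p : ℤ)) * ((r : ℤ) - 1))
    (η : ℕ) (hη : η = (r - 1) * n - k)
    (D : ℕ) (hD : D = (r - 1) * (r * n + p - 1))
    (μ : ℕ) (hμ : μ = D.descFactorial t)
    (w : ℂ) (hw : w = Complex.exp (2 * Real.pi * Complex.I / r))
    (x : Fin η → ℂ)
    (hfac : Polynomial.derivative^[t] (RBon r (r * n + p)) =
      Polynomial.C (μ : ℂ) * ∏ i : Fin η, ∏ l ∈ Finset.range r,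
        (Polynomial.X - Polynomial.C (x i * w ^ l))) :
    (μ : ℂ) * ∑ i : Fin η, x i ^ r
      = -((D - r).descFactorial t : ℂ) * (rnomial r (r * n + p - 2) 1 : ℂ) := by
  -- inner products are X^r - C (x i ^ r)
  have hprim : IsPrimitiveRoot w r := by
    rw [hw]; exact Complex.isPrimitiveRoot_exp r (by omega)
  have hinner : ∀ i : Fin η, ∏ l ∈ Finset.range r, (X - C (x i * w ^ l))
      = X ^ r - C (x i ^ r) := by
    intro i
    have h1 := X_pow_sub_C_eq_prod hprim (show 0 < r by omega) (rfl : (x i) ^ r = (x i) ^ r)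
    rw [h1]
    exact Finset.prod_congr rfl fun l _ => by rw [mul_comm]
  rw [funext hinner] at hfac
  -- arithmetic setup
  have hm0 : 2 ≤ r * n + p :=
    le_trans (le_trans (by norm_num) (Nat.mul_le_mul hr hn)) (Nat.le_add_right _ _)
  have hηZ : (η : ℤ) = ((r:ℤ) - 1) * (n:ℤ) - (k:ℤ) := by
    rw [hη, Nat.cast_sub hk2, Nat.cast_mul, Nat.cast_sub (by omega : 1 ≤ r), Nat.cast_one]
  have hDZ : (D : ℤ) = ((r:ℤ) - 1) * ((r:ℤ) * n + p - 1) := by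
    rw [hD, Nat.cast_mul, Nat.cast_sub (by omega : 1 ≤ r),
      Nat.cast_sub (le_trans (by norm_num) hm0), Nat.cast_add, Nat.cast_mul]
    push_cast
    ring
  have htrZ : (t : ℤ) + (r : ℤ) * (η : ℤ) = (D : ℤ) := by
    linear_combination ht + (r:ℤ) * hηZ - hDZ
  have htrN : t + r * η = D := by exact_mod_cast htrZ
  have hD1 : 1 ≤ D := by
    rw [hD]
    exact Nat.one_le_iff_ne_zero.mpr (Nat.mul_ne_zero (by omega) (by omega))
  -- rnomial value
  have hrn : rnomial r (r * n + p - 2) 1 = r * n + p - 2 := rnomial_aux r hr _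
  -- abstract r*n+p
  generalize hM : r * n + p = M at hm0 hD1 hD hfac hrn ⊢
  rcases Nat.eq_zero_or_pos η with h0 | hpos
  · subst h0
    have hdf : (D - r).descFactorial t = 0 := by
      apply (Nat.descFactorial_eq_zero_iff_lt).mpr
      omega
    rw [hdf]
    simp
  · obtain ⟨η', rfl⟩ : ∃ η', η = η' + 1 := ⟨η - 1, by omega⟩
    obtain ⟨c, hc⟩ : ∃ c, r * η' = c := ⟨_, rfl⟩
    have htr2 : t + (c + r) = D := by rw [← hc, ← Nat.mul_succ]; exact htrN
    have key : (Polynomial.derivative^[t] (RBon r M)).coeff (r * η')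
        = (Polynomial.C (μ : ℂ) * ∏ i : Fin (η' + 1), (X ^ r - C (x i ^ r))).coeff (r * η') := by
      rw [hfac]
    rw [Polynomial.coeff_iterate_derivative] at key
    have hidx : r * η' + t = D - r := by omega
    rw [hidx] at key
    have hcoeff : (RBon r M).coeff (D - r) = ((M - 2 : ℕ) : ℂ) := by
      rw [hD]
      exact RBon_coeff_sub r hr M hm0
    rw [hcoeff] at key
    rw [Polynomial.coeff_C_mul, prod_X_pow_sub_C, coeff_comp_X_pow _ r (by omega) η'] at key
    have hP : (∏ i : Fin (η' + 1), (X - C (x i ^ r))).coeff η' = -∑ i : Fin (η' + 1), x i ^ r := by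
      have h := Polynomial.prod_X_sub_C_coeff_card_pred (Finset.univ : Finset (Fin (η' + 1)))
        (fun i => x i ^ r) (by simp)
      simpa using h
    rw [hP, nsmul_eq_mul] at key
    rw [hrn]
    linear_combination key
end

section
/- Let n ≥ 3 be an integer and let p ∈ {0, 1}, and set t = 2n - 5 + p, D = 2n + p - 1, and μ = D(D-1)···(D-t+1) (the falling factorial of D of length t). Define ψ₂ = -((D-2)(D-3)···(D-2-t+1)/μ)·(2n+p-2) and υ₂ = (t!/μ)·binom(2n+p-3, 2). Then every complex root x of the t-th derivative F_{2n+p}^{(t)} of the Fibonacci polynomial F_{2n+p} satisfies (x^2)^2 - ψ₂·x^2 + υ₂ = 0; in particular x^2 = (ψ₂ + √(ψ₂² - 4υ₂))/2 or x^2 = (ψ₂ - √(ψ₂² - 4υ₂))/2. -/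
open Polynomial in
lemma RBon2_zero' : RBon 2 0 = 0 := by rw [RBon]

open Polynomial in
lemma RBon2_one' : RBon 2 1 = 1 := by rw [RBon]

open Polynomial in
lemma RBon2_rec' (n : ℕ) : RBon 2 (n+2) = RBon 2 n + X * RBon 2 (n+1) := by
  rw [RBon, Finset.sum_attach (Finset.range 2) (fun j => X ^ j * RBon 2 (n + 2 - (2 - j)))]
  simp [Finset.sum_range_succ]

def gAux (m k : ℕ) : ℕ :=
  if k + 1 ≤ m ∧ (m - k - 1) % 2 = 0 then Nat.choose (k + (m - k - 1)/2) ((m - k - 1)/2) else 0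

open Polynomial in
lemma RBon2_coeff' : ∀ m k, (RBon 2 m).coeff k = gAux m k := by
  intro m
  induction m using Nat.strong_induction_on with
  | _ m ih =>
    match m with
    | 0 => intro k; simp [RBon2_zero', gAux]
    | 1 =>
      intro k
      rw [RBon2_one', Polynomial.coeff_one]
      rcases Nat.eq_zero_or_pos k with hk | hk
      · subst hk; simp [gAux]
      · rw [if_neg (by omega), gAux, if_neg (by omega)]; simp
    | (n+2) =>
      intro k
      rw [RBon2_rec', Polynomial.coeff_add]
      rcases Nat.eq_zero_or_pos k with hk | hk
      · subst hk
        rw [Polynomial.mul_coeff_zero, Polynomial.coeff_X_zero, zero_mul, add_zero,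
          ih n (by omega) 0]
        unfold gAux
        rcases Nat.eq_zero_or_pos n with hn | hn
        · subst hn; norm_num
        · by_cases hpar : (n - 1) % 2 = 0
          · rw [if_pos ⟨by omega, by omega⟩, if_pos ⟨by omega, by omega⟩]
            norm_cast
            rw [show 0 + (n + 2 - 0 - 1)/2 = (n+2-0-1)/2 from by omega,
              show 0 + (n - 0 - 1)/2 = (n-0-1)/2 from by omega,
              Nat.choose_self, Nat.choose_self]
          · rw [if_neg (by omega), if_neg (by omega)]
      · obtain ⟨k', rfl⟩ : ∃ k', k = k' + 1 := ⟨k - 1, by omega⟩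
        rw [Polynomial.coeff_X_mul, ih n (by omega) (k'+1), ih (n+1) (by omega) k']
        unfold gAux
        by_cases hle : k' ≤ n
        · by_cases hpar : (n - k') % 2 = 0
          · rcases Nat.eq_zero_or_pos (n - k') with h0 | h0
            · rw [if_neg (by omega), if_pos ⟨by omega, by omega⟩,
                if_pos ⟨by omega, by omega⟩]
              norm_cast
              rw [show (n + 1 - k' - 1)/2 = 0 from by omega,
                show (n + 2 - (k'+1) - 1)/2 = 0 from by omega]
              simp
            · obtain ⟨j, hj⟩ : ∃ j, n - k' = 2 * (j+1) := ⟨(n-k')/2 - 1, by omega⟩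
              rw [if_pos ⟨by omega, by omega⟩, if_pos ⟨by omega, by omega⟩,
                if_pos ⟨by omega, by omega⟩]
              norm_cast
              rw [show (n - (k'+1) - 1)/2 = j from by omega,
                show (n + 1 - k' - 1)/2 = j + 1 from by omega,
                show (n + 2 - (k'+1) - 1)/2 = j + 1 from by omega,
                show k' + 1 + (j+1) = (k'+1+j) + 1 from by ring,
                Nat.choose_succ_succ,
                show k' + (j+1) = k'+1+j from by ring]
          · rw [if_neg (by omega), if_neg (by omega), if_neg (by omega)]; simp
        · rw [if_neg (by omega), if_neg (by omega), if_neg (by omega)]; simp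

open Polynomial in
lemma derivIter_eq' (t : ℕ) : derivative^[t] (RBon 2 (t+5)) =
    C (((t+4).descFactorial t : ℕ) : ℂ) * X^4
      + C (((t+2).descFactorial t * (t+3) : ℕ) : ℂ) * X^2
      + C ((t.factorial * Nat.choose (t+2) 2 : ℕ) : ℂ) := by
  ext k
  rw [Polynomial.coeff_iterate_derivative, RBon2_coeff', gAux]
  simp only [coeff_add, coeff_C_mul, coeff_X_pow, coeff_C, smul_eq_mul]
  match k with
  | 0 =>
    rw [if_pos ⟨by omega, by omega⟩, show (t+5 - (0+t) - 1)/2 = 2 from by omega,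
      show (0:ℕ) + t = t from by omega]
    simp [Nat.descFactorial_self]
  | 1 => rw [if_neg (by omega)]; norm_num
  | 2 =>
    rw [if_pos ⟨by omega, by omega⟩, show (t+5 - (2+t) - 1)/2 = 1 from by omega,
      show (2:ℕ) + t = t + 2 from by omega]
    simp [Nat.choose_one_right]
    ring
  | 3 => rw [if_neg (by omega)]; norm_num
  | 4 =>
    rw [if_pos ⟨by omega, by omega⟩, show (t+5 - (4+t) - 1)/2 = 0 from by omega,
      show (4:ℕ) + t = t + 4 from by omega]
    simp
  | (k+5) =>
    rw [if_neg (by omega), if_neg (by omega : ¬(k+5 = 4)), if_neg (by omega : ¬(k+5 = 2))]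
    norm_num

theorem stmt_12 (n : ℕ) (hn : 3 ≤ n) (p : ℕ) (hp : p ≤ 1)
    (t : ℕ) (ht : t = 2 * n - 5 + p)
    (D : ℕ) (hD : D = 2 * n + p - 1)
    (μ : ℕ) (hμ : μ = D.descFactorial t)
    (ψ υ : ℂ)
    (hψ : ψ = -(((D - 2).descFactorial t : ℂ) / (μ : ℂ)) * ((2 * n + p - 2 : ℕ) : ℂ))
    (hυ : υ = ((t.factorial : ℂ) / (μ : ℂ)) * (Nat.choose (2 * n + p - 3) 2 : ℂ)) :
    ∀ x : ℂ, (Polynomial.derivative^[t] (RBon 2 (2 * n + p))).IsRoot x →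
      (x ^ 2) ^ 2 - ψ * x ^ 2 + υ = 0 ∧
        (x ^ 2 = (ψ + (ψ ^ 2 - 4 * υ) ^ ((1 : ℂ) / 2)) / 2 ∨
         x ^ 2 = (ψ - (ψ ^ 2 - 4 * υ) ^ ((1 : ℂ) / 2)) / 2) := by
  intro x hx
  have hm : 2 * n + p = t + 5 := by omega
  have hD4 : D = t + 4 := by omega
  have hD2 : D - 2 = t + 2 := by omega
  have h2 : 2 * n + p - 2 = t + 3 := by omega
  have h3 : 2 * n + p - 3 = t + 2 := by omega
  rw [hm, Polynomial.IsRoot, derivIter_eq'] at hx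
  simp only [Polynomial.eval_add, Polynomial.eval_mul, Polynomial.eval_C, Polynomial.eval_pow,
    Polynomial.eval_X] at hx
  have hμval : μ = (t+4).descFactorial t := by rw [hμ, hD4]
  have hμ0 : (μ : ℂ) ≠ 0 := by
    have : μ ≠ 0 := by
      rw [hμval]
      intro h
      have := Nat.descFactorial_eq_zero_iff_lt.mp h
      omega
    exact_mod_cast this
  have hψ' : ψ = -(((t+2).descFactorial t : ℂ) / (μ : ℂ)) * ((t+3 : ℕ) : ℂ) := by
    rw [hψ, hD2, h2]
  have hυ' : υ = ((t.factorial : ℂ) / (μ : ℂ)) * (Nat.choose (t+2) 2 : ℂ) := by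
    rw [hυ, h3]
  have hc : ((t+4).descFactorial t : ℂ) = (μ : ℂ) := by exact_mod_cast hμval.symm
  have key : (x ^ 2) ^ 2 - ψ * x ^ 2 + υ = 0 := by
    rw [hψ', hυ']
    rw [hc] at hx
    push_cast at hx ⊢
    field_simp
    linear_combination hx
  refine ⟨key, ?_⟩
  set s : ℂ := (ψ ^ 2 - 4 * υ) ^ ((1 : ℂ) / 2) with hs
  have hs2 : s ^ 2 = ψ ^ 2 - 4 * υ := by
    rw [hs, show (1:ℂ)/2 = ((2:ℕ):ℂ)⁻¹ from by norm_num]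
    exact Complex.cpow_nat_inv_pow _ two_ne_zero
  have hfac : (2 * x ^ 2 - ψ - s) * (2 * x ^ 2 - ψ + s) = 0 := by
    linear_combination 4 * key - hs2
  rcases mul_eq_zero.mp hfac with h | h
  · left; linear_combination h / 2
  · right; linear_combination h / 2
end

section
/- Let n ≥ 2 be an integer and let p ∈ {0, 1, 2}, and set t = 6n - 8 + 2p, D = 2(3n + p - 1), and μ = D(D-1)···(D-t+1) (the falling factorial of D of length t). Define ψ₂ = -((D-3)(D-4)···(D-3-t+1)/μ)·C_3(3n+p-2, 1) and υ₂ = (t!/μ)·C_3(3n+p-3, 2). Then every complex root x of the t-th derivative T_{3n+p}^{(t)} of the Tribonacci polynomial T_{3n+p} satisfies (x^3)^2 - ψ₂·x^3 + υ₂ = 0; in particular x^3 = (ψ₂ + √(ψ₂² - 4υ₂))/2 or x^3 = (ψ₂ - √(ψ₂² - 4υ₂))/2. -/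
open Polynomial

lemma RBon3_rec (n : ℕ) : RBon 3 (n+3) = RBon 3 n + X * RBon 3 (n+1) + X^2 * RBon 3 (n+2) := by
  rw [show n+3 = (n+1)+2 from rfl, RBon]
  rw [Finset.sum_attach (Finset.range 3) (fun i => X ^ i * RBon 3 (n + 1 + 2 - (3 - i)))]
  simp [Finset.sum_range_succ]

lemma RBon3_0 : RBon 3 0 = 0 := by rw [RBon]
lemma RBon3_1 : RBon 3 1 = 1 := by rw [RBon]
lemma RBon3_2 : RBon 3 2 = X^2 := by
  rw [RBon]
  rw [Finset.sum_attach (Finset.range 3) (fun i => X ^ i * RBon 3 (0 + 2 - (3 - i)))]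
  simp [Finset.sum_range_succ, RBon3_0, RBon3_1]

lemma RBon3_3 : RBon 3 3 = X^4 + X := by
  rw [show (3:ℕ) = 0+3 from rfl, RBon3_rec, RBon3_0, RBon3_1, RBon3_2]; ring

lemma RBon3_4 : RBon 3 4 = X^6 + 2*X^3 + 1 := by
  rw [show (4:ℕ) = 1+3 from rfl, RBon3_rec, RBon3_1, RBon3_2, RBon3_3]; ring

lemma RBon3_5 : RBon 3 5 = X^8 + 3*X^5 + 3*X^2 := by
  rw [show (5:ℕ) = 2+3 from rfl, RBon3_rec, RBon3_2, RBon3_3, RBon3_4]; ring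

lemma RBon3_6 : RBon 3 6 = X^10 + 4*X^7 + 6*X^4 + 2*X := by
  rw [show (6:ℕ) = 3+3 from rfl, RBon3_rec, RBon3_3, RBon3_4, RBon3_5]; ring

lemma rn0 (j : ℕ) : rnomial 3 j 0 = 1 := by
  simp [rnomial, coeff_zero_eq_eval_zero, Finset.sum_range_succ]

lemma rn1 (j : ℕ) : rnomial 3 j 1 = j := by
  induction j with
  | zero => simp [rnomial, coeff_one]
  | succ j ih =>
    have h : (∑ i ∈ Finset.range 3, (Polynomial.X : Polynomial ℕ) ^ i) ^ (j+1)
        = (∑ i ∈ Finset.range 3, (Polynomial.X : Polynomial ℕ) ^ i) ^ j * 1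
        + (∑ i ∈ Finset.range 3, (Polynomial.X : Polynomial ℕ) ^ i) ^ j * X
        + (∑ i ∈ Finset.range 3, (Polynomial.X : Polynomial ℕ) ^ i) ^ j * X^2 := by
      rw [pow_succ]; rw [Finset.sum_range_succ, Finset.sum_range_succ, Finset.sum_range_one]; ring
    have := rn0 j
    simp only [rnomial] at ih this ⊢
    rw [h]
    simp [coeff_mul_X, coeff_mul_X_pow', ih, this]

lemma rn2 (j : ℕ) : rnomial 3 (j+1) 2 = rnomial 3 j 2 + j + 1 := by
  have h : (∑ i ∈ Finset.range 3, (Polynomial.X : Polynomial ℕ) ^ i) ^ (j+1)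
      = (∑ i ∈ Finset.range 3, (Polynomial.X : Polynomial ℕ) ^ i) ^ j * 1
      + (∑ i ∈ Finset.range 3, (Polynomial.X : Polynomial ℕ) ^ i) ^ j * X
      + (∑ i ∈ Finset.range 3, (Polynomial.X : Polynomial ℕ) ^ i) ^ j * X^2 := by
    rw [pow_succ]; rw [Finset.sum_range_succ, Finset.sum_range_succ, Finset.sum_range_one]; ring
  have h1 := rn1 j
  have h0 := rn0 j
  simp only [rnomial] at h1 h0 ⊢
  rw [h]
  have e1 : ((∑ i ∈ Finset.range 3, (Polynomial.X : Polynomial ℕ) ^ i) ^ j * X).coeff 2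
      = ((∑ i ∈ Finset.range 3, (Polynomial.X : Polynomial ℕ) ^ i) ^ j).coeff 1 := by
    rw [show (2:ℕ) = 1+1 from rfl, coeff_mul_X]
  simp [coeff_mul_X_pow', e1, h1, h0]

lemma rn2_0 : rnomial 3 0 2 = 0 := by simp [rnomial, coeff_one]

lemma wb_lt {a b : ℕ} (h : a < b) : ((a : ℕ) : WithBot ℕ) < ((b : ℕ) : WithBot ℕ) := by
  exact_mod_cast h

lemma wb_le {a b : ℕ} (h : a ≤ b) : ((a : ℕ) : WithBot ℕ) ≤ ((b : ℕ) : WithBot ℕ) := by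
  exact_mod_cast h

lemma wb_bot (b : ℕ) : (⊥ : WithBot ℕ) < ((b : ℕ) : WithBot ℕ) := by
  rw [Nat.cast_withBot]; exact WithBot.bot_lt_coe _

set_option maxHeartbeats 1000000 in
lemma key_s13 : ∀ k : ℕ, ∃ R : Polynomial ℂ, R.degree < ((2*k : ℕ) : WithBot ℕ) ∧
    RBon 3 (k+4) = X^(2*k+6) + C (rnomial 3 (k+2) 1 : ℂ) * X^(2*k+3)
      + C (rnomial 3 (k+1) 2 : ℂ) * X^(2*k) + R := by
  have main : ∀ k : ℕ,
      (∃ R : Polynomial ℂ, R.degree < ((2*k : ℕ) : WithBot ℕ) ∧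
        RBon 3 (k+4) = X^(2*k+6) + C (rnomial 3 (k+2) 1 : ℂ) * X^(2*k+3)
          + C (rnomial 3 (k+1) 2 : ℂ) * X^(2*k) + R) ∧
      (∃ R : Polynomial ℂ, R.degree < ((2*(k+1) : ℕ) : WithBot ℕ) ∧
        RBon 3 ((k+1)+4) = X^(2*(k+1)+6) + C (rnomial 3 ((k+1)+2) 1 : ℂ) * X^(2*(k+1)+3)
          + C (rnomial 3 ((k+1)+1) 2 : ℂ) * X^(2*(k+1)) + R) ∧
      (∃ R : Polynomial ℂ, R.degree < ((2*(k+2) : ℕ) : WithBot ℕ) ∧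
        RBon 3 ((k+2)+4) = X^(2*(k+2)+6) + C (rnomial 3 ((k+2)+2) 1 : ℂ) * X^(2*(k+2)+3)
          + C (rnomial 3 ((k+2)+1) 2 : ℂ) * X^(2*(k+2)) + R) := by
    intro k
    induction k with
    | zero =>
      refine ⟨⟨0, by simpa using wb_bot 0, ?_⟩, ⟨0, by simpa using wb_bot 2, ?_⟩,
        ⟨C 2 * X, ?_, ?_⟩⟩
      · have h2 : rnomial 3 1 2 = 1 := by rw [show (1:ℕ)=0+1 from rfl, rn2, rn2_0]
        norm_num [RBon3_4, rn1, h2, map_ofNat]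
      · have h2 : rnomial 3 2 2 = 3 := by
          rw [show (2:ℕ)=1+1 from rfl, rn2, show (1:ℕ)=0+1 from rfl, rn2, rn2_0]
        norm_num [RBon3_5, rn1, h2, map_ofNat]
      · have h1 : (C (2:ℂ) * X).degree ≤ ((1:ℕ) : WithBot ℕ) := by
          simpa using degree_C_mul_X_le (2:ℂ)
        exact lt_of_le_of_lt h1 (by simpa using wb_lt (show 1 < 4 by norm_num))
      · have h2 : rnomial 3 3 2 = 6 := by
          rw [show (3:ℕ)=2+1 from rfl, rn2, show (2:ℕ)=1+1 from rfl, rn2,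
            show (1:ℕ)=0+1 from rfl, rn2, rn2_0]
        norm_num [RBon3_6, rn1, h2, map_ofNat]
    | succ k ih =>
      obtain ⟨⟨R0, hd0, he0⟩, ⟨R1, hd1, he1⟩, ⟨R2, hd2, he2⟩⟩ := ih
      refine ⟨⟨R1, hd1, he1⟩, ⟨R2, hd2, he2⟩, ?_⟩
      refine ⟨C (rnomial 3 (k+2) 1 : ℂ) * X^(2*k+3) + C (rnomial 3 (k+1) 2 : ℂ) * X^(2*k) + R0
        + X * (C (rnomial 3 (k+2) 2 : ℂ) * X^(2*(k+1)) + R1) + X^2 * R2, ?_, ?_⟩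
      · -- degree bound: < 2*(k+3) = 2k+6
        refine lt_of_le_of_lt (degree_add_le _ _) (max_lt ?_ ?_)
        · refine lt_of_le_of_lt (degree_add_le _ _) (max_lt ?_ ?_)
          · refine lt_of_le_of_lt (degree_add_le _ _) (max_lt ?_ ?_)
            · refine lt_of_le_of_lt (degree_add_le _ _) (max_lt ?_ ?_)
              · exact lt_of_le_of_lt (degree_C_mul_X_pow_le _ _) (wb_lt (by omega))
              · exact lt_of_le_of_lt (degree_C_mul_X_pow_le _ _) (wb_lt (by omega))
            · exact lt_trans hd0 (wb_lt (by omega))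
          · refine lt_of_le_of_lt (degree_mul_le _ _) ?_
            have hs : (C (rnomial 3 (k+2) 2 : ℂ) * X^(2*(k+1)) + R1).degree
                ≤ ((2*(k+1) : ℕ) : WithBot ℕ) :=
              (degree_add_le _ _).trans (max_le (degree_C_mul_X_pow_le _ _) hd1.le)
            calc X.degree + (C (rnomial 3 (k+2) 2 : ℂ) * X^(2*(k+1)) + R1).degree
                ≤ ((1:ℕ) : WithBot ℕ) + ((2*(k+1) : ℕ) : WithBot ℕ) :=
                  add_le_add degree_X_le hs
              _ < ((2*(k+3) : ℕ) : WithBot ℕ) := by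
                  rw [← Nat.cast_add]; exact wb_lt (by omega)
        · refine lt_of_le_of_lt (degree_mul_le _ _) ?_
          calc (X^2 : Polynomial ℂ).degree + R2.degree
              ≤ ((2:ℕ) : WithBot ℕ) + R2.degree :=
                add_le_add (degree_X_pow_le _) le_rfl
            _ < ((2:ℕ) : WithBot ℕ) + ((2*(k+2) : ℕ) : WithBot ℕ) :=
                WithBot.add_lt_add_left (by simp) hd2
            _ = ((2*(k+3) : ℕ) : WithBot ℕ) := by
                rw [← Nat.cast_add]; exact congrArg _ (by omega)
      · -- the equation
        have hrec := RBon3_rec (k+4)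
        rw [show (k+4)+3 = (k+3)+4 by omega] at hrec
        rw [show (k+4)+1 = (k+1)+4 by omega, show (k+4)+2 = (k+2)+4 by omega] at hrec
        rw [hrec, he0, he1, he2]
        have a1 : rnomial 3 ((k+3)+2) 1 = k+5 := rn1 _
        have a2 : rnomial 3 ((k+2)+2) 1 = k+4 := rn1 _
        have a3 : rnomial 3 ((k+1)+2) 1 = k+3 := rn1 _
        have a4 : rnomial 3 (k+2) 1 = k+2 := rn1 _
        have b1 : rnomial 3 ((k+3)+1) 2 = rnomial 3 (k+3) 2 + (k+3) + 1 := rn2 _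
        rw [a1, a2, a3, a4, b1]
        push_cast
        simp only [map_add, map_natCast, map_ofNat, map_one]
        ring
  exact fun k => (main k).1

lemma itder_add (k : ℕ) (p q : Polynomial ℂ) :
    derivative^[k] (p+q) = derivative^[k] p + derivative^[k] q := by
  simp_rw [← Module.End.pow_apply, map_add]

lemma itder_lowdeg {k : ℕ} {R : Polynomial ℂ} (h : R.degree < ((k:ℕ) : WithBot ℕ)) :
    derivative^[k] R = 0 := by
  rcases eq_or_ne R 0 with rfl | hR
  · simp_rw [← Module.End.pow_apply, map_zero]
  · exact iterate_derivative_eq_zero ((natDegree_lt_iff_degree_lt hR).2 h)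

lemma quad (ψ υ y : ℂ) (h : y^2 - ψ*y + υ = 0) :
    y = (ψ + (ψ^2 - 4*υ) ^ ((1:ℂ)/2))/2 ∨ y = (ψ - (ψ^2 - 4*υ) ^ ((1:ℂ)/2))/2 := by
  have hs : ((ψ^2 - 4*υ) ^ ((1:ℂ)/2))^2 = ψ^2 - 4*υ := by
    rw [one_div]
    exact Complex.cpow_ofNat_inv_pow _ 2
  set s := (ψ^2 - 4*υ) ^ ((1:ℂ)/2) with hsdef
  have h2 : (2*y - ψ - s) * (2*y - ψ + s) = 0 := by linear_combination 4*h - hs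
  rcases mul_eq_zero.1 h2 with h3 | h3
  · left; linear_combination h3/2
  · right; linear_combination h3/2

theorem stmt_13 (n : ℕ) (hn : 2 ≤ n) (p : ℕ) (hp : p ≤ 2)
    (t : ℕ) (ht : t = 6 * n - 8 + 2 * p)
    (D : ℕ) (hD : D = 2 * (3 * n + p - 1))
    (μ : ℕ) (hμ : μ = D.descFactorial t)
    (ψ υ : ℂ)
    (hψ : ψ = -(((D - 3).descFactorial t : ℂ) / (μ : ℂ)) * (rnomial 3 (3 * n + p - 2) 1 : ℂ))
    (hυ : υ = ((t.factorial : ℂ) / (μ : ℂ)) * (rnomial 3 (3 * n + p - 3) 2 : ℂ)) :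
    ∀ x : ℂ, (Polynomial.derivative^[t] (RBon 3 (3 * n + p))).IsRoot x →
      (x ^ 3) ^ 2 - ψ * x ^ 3 + υ = 0 ∧
        (x ^ 3 = (ψ + (ψ ^ 2 - 4 * υ) ^ ((1 : ℂ) / 2)) / 2 ∨
         x ^ 3 = (ψ - (ψ ^ 2 - 4 * υ) ^ ((1 : ℂ) / 2)) / 2) := by
  intro x hx
  obtain ⟨k, hk⟩ : ∃ k, 3*n+p = k+4 := ⟨3*n+p-4, by omega⟩
  have htk : t = 2*k := by omega
  have hDk : D = 2*k+6 := by omega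
  obtain ⟨R, hdR, hER⟩ := key_s13 k
  -- compute the iterated derivative
  have hder : Polynomial.derivative^[t] (RBon 3 (3 * n + p)) =
      C (μ : ℂ) * X^6
      + C (((2*k+3).descFactorial (2*k) : ℂ) * (rnomial 3 (k+2) 1 : ℂ)) * X^3
      + C ((t.factorial : ℂ) * (rnomial 3 (k+1) 2 : ℂ)) := by
    rw [hk, hER, htk, itder_add, itder_add, itder_add,
      iterate_derivative_C_mul, iterate_derivative_C_mul,
      iterate_derivative_X_pow_eq_C_mul, iterate_derivative_X_pow_eq_C_mul,
      iterate_derivative_X_pow_eq_C_mul, itder_lowdeg hdR,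
      show 2*k+6-2*k = 6 by omega, show 2*k+3-2*k = 3 by omega, show 2*k-2*k = 0 by omega]
    rw [hμ, hDk, htk, Nat.descFactorial_self]
    push_cast
    simp only [map_mul]
    ring
  have hE : (μ : ℂ) * x^6
      + ((2*k+3).descFactorial (2*k) : ℂ) * (rnomial 3 (k+2) 1 : ℂ) * x^3
      + (t.factorial : ℂ) * (rnomial 3 (k+1) 2 : ℂ) = 0 := by
    have := hx
    rw [Polynomial.IsRoot, hder] at this
    simpa [mul_assoc] using this
  have hμ0 : (μ : ℂ) ≠ 0 := by
    have : μ ≠ 0 := by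
      rw [hμ]
      intro h0
      have := Nat.descFactorial_eq_zero_iff_lt.1 h0
      omega
    exact_mod_cast this
  rw [htk] at hE
  have hidx2 : 3 * n + p - 2 = k + 2 := by omega
  have hidx3 : 3 * n + p - 3 = k + 1 := by omega
  have hD3 : D - 3 = 2*k+3 := by omega
  have goal1 : (x ^ 3) ^ 2 - ψ * x ^ 3 + υ = 0 := by
    have h2 : (μ : ℂ) * ((x ^ 3) ^ 2 - ψ * x ^ 3 + υ) = 0 := by
      rw [hψ, hυ, hidx2, hidx3, hD3, htk]
      field_simp
      linear_combination hE
    exact (mul_eq_zero.1 h2).resolve_left hμ0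
  exact ⟨goal1, quad _ _ _ goal1⟩
end
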